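/- For every z ∈ ℂ with Re(z) ≤ 0 and 1 − z/4 + z²/48 ≠ 0, the modulus of R(z) = (1 + z/4 + z²/48)/(1 − z/4 + z²/48) satisfies |R(z)| ≤ 1. -/

import Mathlib

/-!
Write the numerator and denominator as `p + q` and `p - q` with `p = 1 + z²/48` and `q = z/4`.
Then `|p + q|² - |p - q|² = 4 Re(p q̄)`, and since `z² z̄ = |z|² z`,
`Re(p q̄) = Re z · (1 + |z|²/48) / 4`, which is `≤ 0` when `Re z ≤ 0`.
-/

open Complex ComplexConjugate

theorem Complex.norm_add_le_norm_sub_iff (p q : ℂ) :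
    ‖p + q‖ ≤ ‖p - q‖ ↔ (p * conj q).re ≤ 0 := by
  rw [← sq_le_sq₀ (norm_nonneg _) (norm_nonneg _), Complex.sq_norm, Complex.sq_norm, normSq_add, normSq_sub]
  constructor <;> intro h <;> linarith

theorem Complex.re_mul_conj_one_add_sq_div_48 (z : ℂ) :
    ((1 + z ^ 2 / 48) * conj (z / 4)).re = z.re * (1 + normSq z / 48) / 4 := by
  have h : (1 + z ^ 2 / 48) * conj (z / 4) = (conj z + z * (z * conj z) / 48) / 4 := by
    rw [map_div₀, map_ofNat]
    ring
  rw [h, mul_conj]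
  simp only [div_ofNat_re, add_re, conj_re, re_mul_ofReal]
  ring

theorem stmt_12 (z : ℂ) (hre : z.re ≤ 0) (hden : 1 - z/4 + z^2/48 ≠ 0) :
    ‖(1 + z/4 + z^2/48) / (1 - z/4 + z^2/48)‖ ≤ 1 := by
  rw [norm_div, div_le_one (norm_pos_iff.mpr hden)]
  have hnum : 1 + z / 4 + z ^ 2 / 48 = (1 + z ^ 2 / 48) + z / 4 := by ring
  have hden' : 1 - z / 4 + z ^ 2 / 48 = (1 + z ^ 2 / 48) - z / 4 := by ring
  rw [hnum, hden', norm_add_le_norm_sub_iff, re_mul_conj_one_add_sq_div_48]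
  have := normSq_nonneg z
  nlinarith
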